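/- arXiv:2504.17835 — 2 statements merged into one kernel-verified Lean document; each statement's English description precedes it below -/
import Mathlib

section
/- For each fixed k ∈ {1,…,6}, the sizes of the image disks are strictly decreasing in n: for every positive integer n, diam(φ_{k,n+1}(𝔻)) < diam(φ_{k,n}(𝔻)). -/
open Complex Metric Set
open scoped ENNReal

noncomputable section

/-- λ = √3 -/
def lam : ℝ := Real.sqrt 3

/-- The Möbius map f(z) = ((λ−1)z+1)/(−z+λ+1). -/
def apolF : ℂ → ℂ := fun z => (((lam : ℂ) - 1) * z + 1) / (-z + (lam : ℂ) + 1)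

/-- Rotation by angle θ. -/
def Rot (θ : ℝ) : ℂ → ℂ := fun z => Complex.exp ((θ : ℂ) * Complex.I) * z

/-- θ_k = (−1)^k · 2π/3 -/
def thetaA (k : ℕ) : ℝ := (-1 : ℝ) ^ k * (2 * Real.pi / 3)

/-- θ'_k = 2πk/3 -/
def thetaB (k : ℕ) : ℝ := 2 * Real.pi * k / 3

/-- The Apollonian generators φ_{k,n} = R_{θ'_k} ∘ f^n ∘ R_{θ_k} ∘ f. -/
def phi (k n : ℕ) : ℂ → ℂ := Rot (thetaB k) ∘ (apolF^[n]) ∘ Rot (thetaA k) ∘ apolF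

/-- The closed unit disk 𝔻. -/
def unitD : Set ℂ := Metric.closedBall (0 : ℂ) 1

/-! Each `φ_{k,n}` is a Möbius map `z ↦ (a z + b) / (c z + d)` with `|c| < |d|`, and such a map
sends `𝔻` onto the disk of radius `|a d - b c| / (|d|² - |c|²)`. Multiplying matrices, `fⁿ` is
given by `[[λ - n, n], [-n, λ + n]]` (`f` is parabolic, fixing `1`), and because
`cos θ_k = -1/2` for every `k`, the disk `φ_{k,n}(𝔻)` has radius
`9 / (6λn² + (18 + 6λ)n + 6λ + 9)`, which decreases strictly in `n`. -/

open ComplexConjugate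

def mobius (a b c d z : ℂ) : ℂ := (a * z + b) / (c * z + d)

def mobiusCenter (a b c d : ℂ) : ℂ := (b * conj d - a * conj c) / (‖d‖ ^ 2 - ‖c‖ ^ 2 : ℝ)

def mobiusRadius (a b c d : ℂ) : ℝ := ‖a * d - b * c‖ / (‖d‖ ^ 2 - ‖c‖ ^ 2)

section Mobius

variable {a b c d z w : ℂ}

lemma sq_norm_sub_sq_norm_pos (hcd : ‖c‖ < ‖d‖) : 0 < ‖d‖ ^ 2 - ‖c‖ ^ 2 :=
  sub_pos.2 (pow_lt_pow_left₀ hcd (norm_nonneg c) two_ne_zero)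

lemma mobius_denom_ne_zero (hcd : ‖c‖ < ‖d‖) (hz : ‖z‖ ≤ 1) : c * z + d ≠ 0 := by
  intro h
  have : ‖d‖ ≤ ‖c‖ :=
    calc ‖d‖ = ‖c‖ * ‖z‖ := by rw [eq_neg_of_add_eq_zero_right h, norm_neg, norm_mul]
      _ ≤ ‖c‖ := mul_le_of_le_one_right (norm_nonneg c) hz
  linarith

lemma mul_mobius (s : ℂ) : s * mobius a b c d z = mobius (s * a) (s * b) c d z := by
  simp only [mobius]
  ring

lemma mobius_smul {s : ℂ} (hs : s ≠ 0) :
    mobius (s * a) (s * b) (s * c) (s * d) = mobius a b c d := by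
  funext z
  rw [mobius, mobius, show s * a * z + s * b = s * (a * z + b) by ring,
    show s * c * z + s * d = s * (c * z + d) by ring, mul_div_mul_left _ _ hs]

lemma mobius_mobius {a' b' c' d' : ℂ} (h' : c' * z + d' ≠ 0)
    (h : c * mobius a' b' c' d' z + d ≠ 0) :
    mobius a b c d (mobius a' b' c' d' z) =
      mobius (a * a' + b * c') (a * b' + b * d') (c * a' + d * c') (c * b' + d * d') z := by
  set v := mobius a' b' c' d' z
  have hv : v * (c' * z + d') = a' * z + b' := div_mul_cancel₀ _ h'
  have hden : (c * a' + d * c') * z + (c * b' + d * d') = (c * v + d) * (c' * z + d') := by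
    linear_combination (-c) * hv
  rw [mobius, mobius, div_eq_div_iff h (hden ▸ mul_ne_zero h h')]
  linear_combination (a * d - b * c) * hv

lemma sq_norm_mul_add_sub_sq_norm_conj (c d z : ℂ) :
    ‖c * z + d‖ ^ 2 - ‖conj d * z + conj c‖ ^ 2 = (‖d‖ ^ 2 - ‖c‖ ^ 2) * (1 - ‖z‖ ^ 2) := by
  simp only [Complex.sq_norm, normSq_apply, add_re, add_im, mul_re, mul_im, conj_re, conj_im]
  ring

lemma ofReal_sq_norm_sub_sq_norm (c d : ℂ) :
    ((‖d‖ ^ 2 - ‖c‖ ^ 2 : ℝ) : ℂ) = d * conj d - c * conj c := by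
  rw [mul_conj, mul_conj, ← Complex.sq_norm, ← Complex.sq_norm]
  push_cast
  ring

lemma mobius_sub_mobiusCenter (hcd : ‖c‖ < ‖d‖) (hz : c * z + d ≠ 0) :
    mobius a b c d z - mobiusCenter a b c d =
      (a * d - b * c) * (conj d * z + conj c) / ((c * z + d) * (‖d‖ ^ 2 - ‖c‖ ^ 2 : ℝ)) := by
  rw [mobius, mobiusCenter,
    div_sub_div _ _ hz (ofReal_ne_zero.2 (sq_norm_sub_sq_norm_pos hcd).ne'),
    ofReal_sq_norm_sub_sq_norm]
  ring

lemma dist_mobius_mobiusCenter_le_iff (hcd : ‖c‖ < ‖d‖) (hdet : a * d - b * c ≠ 0)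
    (hz : c * z + d ≠ 0) :
    dist (mobius a b c d z) (mobiusCenter a b c d) ≤ mobiusRadius a b c d ↔ ‖z‖ ≤ 1 := by
  have hΔ := sq_norm_sub_sq_norm_pos hcd
  have hA : 0 < ‖c * z + d‖ := norm_pos_iff.2 hz
  rw [dist_eq_norm, mobius_sub_mobiusCenter hcd hz, norm_div, norm_mul, norm_mul, norm_real,
    Real.norm_of_nonneg hΔ.le, mobiusRadius, mul_comm ‖c * z + d‖, mul_div_mul_comm,
    mul_le_iff_le_one_right (div_pos (norm_pos_iff.2 hdet) hΔ), div_le_one hA,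
    ← sq_le_sq₀ (norm_nonneg _) hA.le, ← sub_nonneg, sq_norm_mul_add_sub_sq_norm_conj,
    mul_nonneg_iff_of_pos_left hΔ, sub_nonneg, sq_le_one_iff₀ (norm_nonneg z)]

/-- `a / c` is the image of `∞`, which lies outside the image of the unit disk. -/
lemma mobiusRadius_lt_dist_div (hcd : ‖c‖ < ‖d‖) (hdet : a * d - b * c ≠ 0) (hc : c ≠ 0) :
    mobiusRadius a b c d < dist (a / c) (mobiusCenter a b c d) := by
  have hΔ := sq_norm_sub_sq_norm_pos hcd
  have hsub : a / c - mobiusCenter a b c d =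
      conj d * (a * d - b * c) / (c * (‖d‖ ^ 2 - ‖c‖ ^ 2 : ℝ)) := by
    rw [mobiusCenter, div_sub_div _ _ hc (ofReal_ne_zero.2 hΔ.ne'), ofReal_sq_norm_sub_sq_norm]
    ring
  rw [dist_eq_norm, hsub, norm_div, norm_mul, norm_mul, norm_conj, norm_real,
    Real.norm_of_nonneg hΔ.le, mobiusRadius, mul_div_mul_comm,
    lt_mul_iff_one_lt_left (div_pos (norm_pos_iff.2 hdet) hΔ), one_lt_div (norm_pos_iff.2 hc)]
  exact hcd

lemma mobius_denom_inv (hw : -c * w + a ≠ 0) :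
    c * mobius d (-b) (-c) a w + d = (a * d - b * c) / (-c * w + a) := by
  rw [mobius, eq_div_iff hw, add_mul, mul_assoc, div_mul_cancel₀ _ hw]
  ring

lemma mobius_mobius_inv (hdet : a * d - b * c ≠ 0) (hw : -c * w + a ≠ 0) :
    mobius a b c d (mobius d (-b) (-c) a w) = w := by
  rw [mobius_mobius hw (by rw [mobius_denom_inv hw]; exact div_ne_zero hdet hw), mobius,
    show (c * d + d * -c) * w + (c * -b + d * a) = a * d - b * c by ring,
    div_eq_iff hdet]
  ring

theorem image_mobius_closedBall (hcd : ‖c‖ < ‖d‖) (hdet : a * d - b * c ≠ 0) :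
    mobius a b c d '' closedBall 0 1 =
      closedBall (mobiusCenter a b c d) (mobiusRadius a b c d) := by
  ext w
  constructor
  · rintro ⟨z, hz, rfl⟩
    rw [mem_closedBall_zero_iff] at hz
    exact (dist_mobius_mobiusCenter_le_iff hcd hdet (mobius_denom_ne_zero hcd hz)).2 hz
  · intro hw
    have hpole : -c * w + a ≠ 0 := by
      intro h
      have hc : c ≠ 0 := by
        rintro rfl
        apply hdet
        simp_all
      have hwc : w = a / c := by
        rw [eq_div_iff hc]
        linear_combination -h
      exact (mobiusRadius_lt_dist_div hcd hdet hc).not_ge (hwc ▸ hw)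
    refine ⟨mobius d (-b) (-c) a w, ?_, mobius_mobius_inv hdet hpole⟩
    have hden : c * mobius d (-b) (-c) a w + d ≠ 0 := by
      rw [mobius_denom_inv hpole]
      exact div_ne_zero hdet hpole
    rw [mem_closedBall_zero_iff, ← dist_mobius_mobiusCenter_le_iff hcd hdet hden,
      mobius_mobius_inv hdet hpole]
    exact hw

theorem diam_image_mobius_closedBall (hcd : ‖c‖ < ‖d‖) (hdet : a * d - b * c ≠ 0) :
    diam (mobius a b c d '' closedBall 0 1) = 2 * (‖a * d - b * c‖ / (‖d‖ ^ 2 - ‖c‖ ^ 2)) := by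
  rw [image_mobius_closedBall hcd hdet, mobiusRadius,
    diam_closedBall_eq _ (div_nonneg (norm_nonneg _) (sq_norm_sub_sq_norm_pos hcd).le)]

end Mobius

lemma lam_sq : lam ^ 2 = 3 := Real.sq_sqrt (by norm_num)

lemma lam_pos : 0 < lam := Real.sqrt_pos.2 (by norm_num)

lemma ofReal_lam_sq : (lam : ℂ) ^ 2 = 3 := by exact_mod_cast lam_sq

lemma norm_natCast_lt_norm_lam_add (m : ℕ) : ‖-(m : ℂ)‖ < ‖(lam : ℂ) + m‖ := by
  rw [norm_neg, norm_natCast, ← ofReal_natCast, ← ofReal_add, norm_real,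
    Real.norm_of_nonneg (by positivity [lam_pos.le])]
  linarith [lam_pos]

lemma apolF_eq_mobius : apolF = mobius (lam - 1) 1 (-1) (lam + 1) := by
  funext z
  rw [apolF, mobius]
  ring_nf

lemma norm_apolF_le_one {z : ℂ} (hz : ‖z‖ ≤ 1) : ‖apolF z‖ ≤ 1 := by
  have hden : -1 * z + (lam + 1) ≠ 0 := by
    simpa using mobius_denom_ne_zero (norm_natCast_lt_norm_lam_add 1) hz
  rw [apolF_eq_mobius, mobius, norm_div, div_le_one (norm_pos_iff.2 hden),
    ← sq_le_sq₀ (norm_nonneg _) (norm_nonneg _), Complex.sq_norm, Complex.sq_norm]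
  have hxy : z.re ^ 2 + z.im ^ 2 ≤ 1 := by
    rw [← sq_le_one_iff₀ (norm_nonneg z), Complex.sq_norm, normSq_apply] at hz
    linarith
  have hx : z.re ≤ 1 := by nlinarith [sq_nonneg z.im]
  have h2lam : 3 < 2 * lam := by nlinarith [lam_sq, lam_pos]
  simp only [normSq_apply, add_re, add_im, mul_re, mul_im, sub_re, sub_im, neg_re, neg_im,
    ofReal_re, ofReal_im, one_re, one_im]
  -- modulo `λ² = 3`, the right side minus the left is `(1 - x) (3 + 2λ - (2λ - 3) x) + (2λ - 3) y²`
  nlinarith [lam_sq,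
    mul_nonneg (sub_nonneg.2 hx) (by nlinarith : 0 ≤ 3 + 2 * lam - (2 * lam - 3) * z.re),
    mul_nonneg (by linarith : (0 : ℝ) ≤ 2 * lam - 3) (sq_nonneg z.im)]

lemma apolF_iterate_eq_mobius (m : ℕ) {z : ℂ} (hz : ‖z‖ ≤ 1) :
    apolF^[m] z = mobius (lam - m) m (-m) (lam + m) z := by
  induction m generalizing z with
  | zero => simp [mobius, lam_pos.ne']
  | succ m ih =>
    rw [Function.iterate_succ_apply, ih (norm_apolF_le_one hz), apolF_eq_mobius,
      mobius_mobius (by simpa using mobius_denom_ne_zero (norm_natCast_lt_norm_lam_add 1) hz)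
        (by rw [← apolF_eq_mobius]
            exact mobius_denom_ne_zero (norm_natCast_lt_norm_lam_add m) (norm_apolF_le_one hz))]
    conv_rhs => rw [← mobius_smul (s := lam) (ofReal_ne_zero.2 lam_pos.ne')]
    congr 1 <;> push_cast <;> ring

lemma mul_apolF_iterate_mul_apolF {u : ℂ} (hu : ‖u‖ = 1) (v : ℂ) (m : ℕ) {z : ℂ}
    (hz : ‖z‖ ≤ 1) :
    v * apolF^[m] (u * apolF z) =
      mobius (v * ((lam - m) * u * (lam - 1) - m)) (v * ((lam - m) * u + m * (lam + 1)))
        (-m * u * (lam - 1) - (lam + m)) (-m * u + (lam + m) * (lam + 1)) z := by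
  have hw : ‖u * apolF z‖ ≤ 1 := by rw [norm_mul, hu, one_mul]; exact norm_apolF_le_one hz
  rw [apolF_iterate_eq_mobius m hw, apolF_eq_mobius, mul_mobius u,
    mobius_mobius (by simpa using mobius_denom_ne_zero (norm_natCast_lt_norm_lam_add 1) hz)
      (by rw [← mul_mobius, ← apolF_eq_mobius]
          exact mobius_denom_ne_zero (norm_natCast_lt_norm_lam_add m) hw),
    mul_mobius v]
  congr 1 <;> ring

lemma sq_norm_sub_sq_norm_of_re_eq {u : ℂ} (hu : ‖u‖ = 1) (hre : u.re = -1 / 2) (m : ℕ) :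
    ‖-m * u + (lam + m) * (lam + 1)‖ ^ 2 - ‖-m * u * (lam - 1) - (lam + m)‖ ^ 2 =
      6 * lam * m ^ 2 + (18 + 6 * lam) * m + (6 * lam + 9) := by
  have him : u.im ^ 2 = 3 / 4 := by
    have := Complex.sq_norm u
    rw [hu, normSq_apply, hre] at this
    linarith
  simp only [Complex.sq_norm, normSq_apply, add_re, add_im, sub_re, sub_im, mul_re, mul_im,
    neg_re, neg_im, ofReal_re, ofReal_im, natCast_re, natCast_im, one_re, one_im, hre]
  linear_combination (m ^ 2 * (2 * lam - lam ^ 2) : ℝ) * him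
    + (6 * m + 2 * lam * m + lam ^ 2 + 3 + 2 * lam) * lam_sq

lemma diam_image_mul_apolF_iterate_mul_apolF {u v : ℂ} (hu : ‖u‖ = 1) (hre : u.re = -1 / 2)
    (hv : ‖v‖ = 1) (m : ℕ) :
    diam ((fun z => v * apolF^[m] (u * apolF z)) '' closedBall 0 1) =
      18 / (6 * lam * m ^ 2 + (18 + 6 * lam) * m + (6 * lam + 9)) := by
  have hΔ := sq_norm_sub_sq_norm_of_re_eq hu hre m
  have hΔpos : 0 < 6 * lam * m ^ 2 + (18 + 6 * lam) * m + (6 * lam + 9) := by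
    positivity [lam_pos.le]
  have hdet : v * ((lam - m) * u * (lam - 1) - m) * (-m * u + (lam + m) * (lam + 1))
      - v * ((lam - m) * u + m * (lam + 1)) * (-m * u * (lam - 1) - (lam + m)) = 9 * (v * u) := by
    linear_combination (v * u * (3 + lam ^ 2)) * ofReal_lam_sq
  have hcd : ‖-m * u * (lam - 1) - (lam + m)‖ < ‖-m * u + (lam + m) * (lam + 1)‖ :=
    lt_of_pow_lt_pow_left₀ 2 (norm_nonneg _) (by linarith)
  have hnorm : ‖9 * (v * u)‖ = 9 := by rw [norm_mul, norm_mul, hu, hv]; norm_num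
  rw [Set.image_congr fun z hz =>
      mul_apolF_iterate_mul_apolF hu v m (mem_closedBall_zero_iff.1 hz),
    diam_image_mobius_closedBall hcd (by rw [hdet, ← norm_ne_zero_iff, hnorm]; norm_num),
    hdet, hnorm, hΔ]
  ring

lemma re_exp_thetaA_mul_I (k : ℕ) : (cexp (thetaA k * I)).re = -1 / 2 := by
  have h : Real.cos (2 * Real.pi / 3) = -1 / 2 := by
    rw [show 2 * Real.pi / 3 = Real.pi - Real.pi / 3 by ring, Real.cos_pi_sub,
      Real.cos_pi_div_three]
    norm_num
  rw [exp_ofReal_mul_I_re, thetaA]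
  rcases neg_one_pow_eq_or ℝ k with h1 | h1 <;> simpa [h1] using h

lemma diam_image_phi (k m : ℕ) :
    diam (phi k m '' unitD) = 18 / (6 * lam * m ^ 2 + (18 + 6 * lam) * m + (6 * lam + 9)) :=
  diam_image_mul_apolF_iterate_mul_apolF (norm_exp_ofReal_mul_I _) (re_exp_thetaA_mul_I k)
    (norm_exp_ofReal_mul_I _) m

theorem apollonian_disks_decreasing_general (k : ℕ) (n : ℕ) :
    Metric.diam (phi k (n + 1) '' unitD) < Metric.diam (phi k n '' unitD) := by
  rw [diam_image_phi, diam_image_phi]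
  have := lam_pos
  apply div_lt_div_of_pos_left (by norm_num) (by positivity)
  push_cast
  nlinarith

/-- For fixed k, the diameters of the image disks φ_{k,n}(𝔻) are strictly decreasing in n. -/
theorem apollonian_disks_decreasing (k : ℕ) (hk1 : 1 ≤ k) (hk6 : k ≤ 6)
    (n : ℕ) (hn : 1 ≤ n) :
    Metric.diam (phi k (n + 1) '' unitD) < Metric.diam (phi k n '' unitD) :=
  apollonian_disks_decreasing_general k n

end
end

section
/- Let K ≥ 1, t > 1/2 and N a positive integer. If 6·(0.45)^t / ((2t−1)(N+1)^{2t−1}) ≥ K^{2t}·(3.821)^t / N^{2t}, then: (i) for every integer M ≥ N, 6·Σ_{n=M+1}^{∞} ‖φ'_n‖_∞^t ≥ K^{2t}·‖φ'_M‖_∞^t; and (ii) the same hypothesis inequality holds with t replaced by any s with 1/2 < s ≤ t. -/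
open Complex Metric Set
open scoped ENNReal

noncomputable section

/-- ‖φ'_{k,n}‖_∞ = max over the closed unit disk of |φ'_{k,n}|. -/
def Dnorm (k n : ℕ) : ℝ := sSup ((fun z => ‖deriv (phi k n) z‖) '' unitD)

/-!
By the chain rule `|φ'_{1,n}(z)| = (3 / (|den_n(u)| |den_1(z)|))²` with `u = e^{iθ_1} f(z)` and
`den_n(w) = n (1 - w) + λ`. Since `|u| ≤ 1`, `|den_n(u)| ≥ n |1 - u|`, and `|(1 - u) den_1(z)| ≥ √6`
on the disk, so `‖φ'_n‖_∞ ≤ 3 / (2n²)`; the value at `z = 1` gives `‖φ'_n‖_∞ ≥ 1 / (n² + λn + 1)`,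
which is at least `0.45 / n²` for `n ≥ 2`. The integral test then bounds the tail
`Σ_{n>M} ‖φ'_n‖_∞^t` below by `0.45^t / ((2t - 1)(M + 1)^{2t-1})`. Finally the hypothesis reads
`(2t - 1) ρ^t ≤ 6 (N + 1)` with `ρ = K² (3.821 / 0.45) (1 + 1/N)² ≥ 1`, a form that visibly persists
when `N` grows or `t` decreases.
-/

namespace Apollonian

lemma lam_sq : lam ^ 2 = 3 := Real.sq_sqrt (by norm_num)

lemma lam_pos : 0 < lam := Real.sqrt_pos.2 (by norm_num)

lemma three_halves_lt_lam : 3 / 2 < lam := by nlinarith [lam_sq, lam_pos]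

lemma lam_lt_seven_fourths : lam < 7 / 4 := by nlinarith [lam_sq, lam_pos]

/-- In the coordinate `1 / (1 - z)` the map `f` is the translation by `1 / λ`, so `f^n` is the
Möbius map `z ↦ 1 - λ (1 - z) / den n z`. -/
def den (n : ℕ) (z : ℂ) : ℂ := n * (1 - z) + lam

lemma re_den_pos (n : ℕ) {z : ℂ} (hz : z.re ≤ 1) : 0 < (den n z).re := by
  simp only [den, add_re, mul_re, natCast_re, natCast_im, sub_re, one_re, sub_im, one_im,
    ofReal_re]
  nlinarith [lam_pos]

lemma den_ne_zero (n : ℕ) {z : ℂ} (hz : z.re ≤ 1) : den n z ≠ 0 := fun h => by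
  simpa [h] using re_den_pos n hz

lemma apolF_eq_div_den (z : ℂ) : apolF z = ((lam - 1) * z + 1) / den 1 z := by
  simp only [apolF, den, Nat.cast_one, one_mul]
  ring_nf

lemma hasDerivAt_apolF {z : ℂ} (hz : den 1 z ≠ 0) :
    HasDerivAt apolF ((lam / den 1 z) ^ 2) z := by
  have hnum : HasDerivAt (fun w : ℂ => ((lam : ℂ) - 1) * w + 1) (lam - 1) z := by
    simpa using ((hasDerivAt_id z).const_mul ((lam : ℂ) - 1)).add_const 1
  have hden : HasDerivAt (den 1) (-1) z := by
    unfold den; simpa using ((hasDerivAt_id z).const_sub 1).add_const (lam : ℂ)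
  rw [show apolF = fun w => ((lam - 1) * w + 1) / den 1 w from funext apolF_eq_div_den]
  refine (hnum.div hden hz).congr_deriv ?_
  field_simp
  simp only [den, Nat.cast_one, one_mul]
  ring

lemma den_apolF_mul_den_one (n : ℕ) {z : ℂ} (hz : den 1 z ≠ 0) :
    den n (apolF z) * den 1 z = lam * den (n + 1) z := by
  rw [apolF_eq_div_den]
  simp only [den, Nat.cast_succ] at hz ⊢
  field_simp
  ring

lemma norm_apolF_le_one {z : ℂ} (hz : ‖z‖ ≤ 1) : ‖apolF z‖ ≤ 1 := by
  have hd := den_ne_zero 1 ((re_le_norm z).trans hz)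
  rw [apolF_eq_div_den, norm_div, div_le_one (norm_pos_iff.2 hd)]
  have hsq : ‖z‖ ^ 2 = z.re ^ 2 + z.im ^ 2 := by rw [Complex.sq_norm, normSq_apply]; ring
  -- `‖den 1 z‖² - ‖(λ - 1) z + 1‖² ≥ (1 - ‖z‖)(3 + 2λ - (2λ - 3)‖z‖)`
  have key : ‖((lam : ℂ) - 1) * z + 1‖ ^ 2 ≤ ‖den 1 z‖ ^ 2 := by
    simp only [Complex.sq_norm, normSq_apply, den, add_re, add_im, mul_re, mul_im, sub_re, sub_im,
      ofReal_re, ofReal_im, one_re, one_im, Nat.cast_one]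
    nlinarith [lam_sq, three_halves_lt_lam, norm_nonneg z, re_le_norm z,
      mul_nonneg (sub_nonneg.2 hz) (show 0 ≤ 3 + 2 * lam - (2 * lam - 3) * ‖z‖ by
        nlinarith [mul_nonneg (sub_nonneg.2 three_halves_lt_lam.le) (sub_nonneg.2 hz)])]
  exact (pow_le_pow_iff_left₀ (norm_nonneg _) (norm_nonneg _) two_ne_zero).1 key

lemma hasDerivAt_apolF_iterate (n : ℕ) {z : ℂ} (hz : ‖z‖ ≤ 1) :
    HasDerivAt apolF^[n] ((lam / den n z) ^ 2) z := by
  induction n generalizing z with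
  | zero => simpa [den, lam_pos.ne'] using hasDerivAt_id z
  | succ n ih =>
    have hd := den_ne_zero 1 ((re_le_norm z).trans hz)
    rw [Function.iterate_succ]
    refine ((ih (norm_apolF_le_one hz)).comp z (hasDerivAt_apolF hd)).congr_deriv ?_
    have hl : (lam : ℂ) ≠ 0 := ofReal_ne_zero.2 lam_pos.ne'
    rw [← mul_pow, div_mul_div_comm, den_apolF_mul_den_one n hd, mul_div_mul_left _ _ hl]

lemma hasDerivAt_rot (θ : ℝ) (z : ℂ) : HasDerivAt (Rot θ) (exp (θ * I)) z := by
  unfold Rot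
  simpa using (hasDerivAt_id z).const_mul (exp (θ * I))

lemma norm_rot (θ : ℝ) (z : ℂ) : ‖Rot θ z‖ = ‖z‖ := by
  simp [Rot, norm_exp_ofReal_mul_I]

lemma norm_deriv_phi (k n : ℕ) {z : ℂ} (hz : ‖z‖ ≤ 1) :
    ‖deriv (phi k n) z‖ = (3 / (‖den n (Rot (thetaA k) (apolF z))‖ * ‖den 1 z‖)) ^ 2 := by
  have hf : ‖Rot (thetaA k) (apolF z)‖ ≤ 1 := by rw [norm_rot]; exact norm_apolF_le_one hz
  have h := (hasDerivAt_rot (thetaB k) _).comp z <|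
    (hasDerivAt_apolF_iterate n hf).comp z <|
      (hasDerivAt_rot (thetaA k) _).comp z <|
        hasDerivAt_apolF (den_ne_zero 1 ((re_le_norm z).trans hz))
  rw [phi, h.deriv]
  simp only [norm_mul, norm_pow, norm_div, norm_exp_ofReal_mul_I, one_mul, norm_real,
    Real.norm_of_nonneg lam_pos.le]
  rw [← lam_sq]
  ring

lemma exp_thetaA_one : exp (thetaA 1 * I) = -1 / 2 - lam / 2 * I := by
  have h : thetaA 1 = -(Real.pi - Real.pi / 3) := by simp [thetaA]; ring
  apply Complex.ext
  · rw [exp_ofReal_mul_I_re, h, Real.cos_neg, Real.cos_pi_sub, Real.cos_pi_div_three]; norm_num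
  · rw [exp_ofReal_mul_I_im, h, Real.sin_neg, Real.sin_pi_sub, Real.sin_pi_div_three]; simp [lam]

lemma mul_norm_one_sub_le_norm_den (n : ℕ) {u : ℂ} (hu : u.re ≤ 1) :
    n * ‖1 - u‖ ≤ ‖den n u‖ := by
  have key : ‖(n : ℂ) * (1 - u)‖ ^ 2 ≤ ‖den n u‖ ^ 2 := by
    simp only [Complex.sq_norm, normSq_apply, den, add_re, add_im, mul_re, mul_im, sub_re, sub_im,
      ofReal_re, ofReal_im, one_re, one_im, natCast_re, natCast_im]
    nlinarith [mul_nonneg (mul_nonneg (Nat.cast_nonneg (α := ℝ) n) lam_pos.le) (sub_nonneg.2 hu)]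
  rw [← Complex.norm_natCast, ← norm_mul]
  exact (pow_le_pow_iff_left₀ (norm_nonneg _) (norm_nonneg _) two_ne_zero).1 key

/-- Writing `(1 - E f(z)) · den 1 z = b + a z` with `‖b‖² = 6 + 3λ` and `‖a‖² = 6 - 3λ`, the bound
is `(‖b‖ - ‖a‖)² = 12 - 2 √(36 - 27) = 6`. -/
lemma six_le_norm_one_sub_rot_apolF_mul_den_sq {z : ℂ} (hz : ‖z‖ ≤ 1) :
    6 ≤ ‖(1 - Rot (thetaA 1) (apolF z)) * den 1 z‖ ^ 2 := by
  set a : ℂ := -1 - (-1 / 2 - lam / 2 * I) * (lam - 1)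
  set b : ℂ := lam + 1 - (-1 / 2 - lam / 2 * I)
  have hd := den_ne_zero 1 ((re_le_norm z).trans hz)
  have hab : (1 - Rot (thetaA 1) (apolF z)) * den 1 z = b + a * z := by
    rw [Rot, exp_thetaA_one, apolF_eq_div_den]
    field_simp
    simp only [den, a, b, Nat.cast_one]
    ring
  have ha : ‖a‖ ^ 2 = 6 - 3 * lam := by
    simp only [a, Complex.sq_norm, normSq_apply, sub_re, sub_im, mul_re, mul_im, neg_re, neg_im,
      one_re, one_im, div_re, div_im, ofReal_re, ofReal_im, I_re, I_im]
    norm_num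
    nlinarith [lam_sq]
  have hb : ‖b‖ ^ 2 = 6 + 3 * lam := by
    simp only [b, Complex.sq_norm, normSq_apply, sub_re, sub_im, add_re, add_im, mul_re, mul_im,
      neg_re, neg_im, one_re, one_im, div_re, div_im, ofReal_re, ofReal_im, I_re, I_im]
    norm_num
    nlinarith [lam_sq]
  have hab3 : ‖a‖ * ‖b‖ = 3 := by
    have : (‖a‖ * ‖b‖) ^ 2 = 3 ^ 2 := by rw [mul_pow, ha, hb]; nlinarith [lam_sq]
    exact (sq_eq_sq₀ (by positivity) (by norm_num)).1 this
  have hle : ‖b‖ - ‖a‖ ≤ ‖b + a * z‖ := by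
    have := norm_sub_norm_le b (-(a * z))
    rw [norm_neg, norm_mul, sub_neg_eq_add] at this
    nlinarith [norm_nonneg a]
  have hab0 : 0 ≤ ‖b‖ - ‖a‖ := by nlinarith [norm_nonneg a, norm_nonneg b, lam_pos]
  rw [hab]
  nlinarith [pow_le_pow_left₀ hab0 hle 2]

lemma norm_deriv_phi_one_le (n : ℕ) (hn : n ≠ 0) {z : ℂ} (hz : ‖z‖ ≤ 1) :
    ‖deriv (phi 1 n) z‖ ≤ 3 / (2 * n ^ 2) := by
  set u := Rot (thetaA 1) (apolF z)
  have hu : u.re ≤ 1 := (re_le_norm u).trans (by rw [norm_rot]; exact norm_apolF_le_one hz)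
  have hprod : (√6 * n) ^ 2 ≤ (‖den n u‖ * ‖den 1 z‖) ^ 2 := by
    have h6 := six_le_norm_one_sub_rot_apolF_mul_den_sq hz
    have hnu := mul_norm_one_sub_le_norm_den n hu
    rw [norm_mul] at h6
    rw [mul_pow, Real.sq_sqrt (by norm_num)]
    calc 6 * (n : ℝ) ^ 2 ≤ (n * ‖1 - u‖ * ‖den 1 z‖) ^ 2 := by nlinarith
      _ ≤ (‖den n u‖ * ‖den 1 z‖) ^ 2 := by gcongr
  rw [norm_deriv_phi 1 n hz, div_pow]
  calc (3 : ℝ) ^ 2 / (‖den n u‖ * ‖den 1 z‖) ^ 2 ≤ 3 ^ 2 / (√6 * n) ^ 2 := by gcongr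
    _ = 3 / (2 * (n : ℝ) ^ 2) := by rw [mul_pow, Real.sq_sqrt (by norm_num)]; ring

lemma norm_deriv_phi_one_one (n : ℕ) : ‖deriv (phi 1 n) 1‖ = 1 / (n ^ 2 + lam * n + 1) := by
  have hf : apolF 1 = 1 := by
    rw [apolF_eq_div_den, div_eq_one_iff_eq (den_ne_zero 1 (by simp))]
    simp [den]
  have hE : ‖den n (Rot (thetaA 1) 1)‖ ^ 2 = 3 * (n ^ 2 + lam * n + 1) := by
    simp only [Rot, exp_thetaA_one, mul_one, den, Complex.sq_norm, normSq_apply, add_re, add_im,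
      mul_re, mul_im, sub_re, sub_im, one_re, one_im, div_re, div_im, neg_re, neg_im, ofReal_re,
      ofReal_im, I_re, I_im, natCast_re, natCast_im]
    norm_num
    nlinarith [lam_sq]
  have h1 : ‖den 1 1‖ = lam := by simp [den, abs_of_pos lam_pos]
  have hpos : 0 < (n : ℝ) ^ 2 + lam * n + 1 := by positivity [lam_pos]
  rw [norm_deriv_phi 1 n (by simp), hf, div_pow, mul_pow, hE, h1, lam_sq]
  field_simp

lemma mem_upperBounds_norm_deriv_phi_one {n : ℕ} (hn : n ≠ 0) :
    (3 : ℝ) / (2 * (n : ℝ) ^ 2) ∈ upperBounds ((fun z => ‖deriv (phi 1 n) z‖) '' unitD) := by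
  rintro _ ⟨z, hz, rfl⟩
  exact norm_deriv_phi_one_le n hn (mem_closedBall_zero_iff.1 hz)

lemma Dnorm_one_le {n : ℕ} (hn : n ≠ 0) : Dnorm 1 n ≤ 3 / (2 * n ^ 2) :=
  csSup_le ⟨_, 0, by simp [unitD], rfl⟩ (mem_upperBounds_norm_deriv_phi_one hn)

lemma le_Dnorm_one {n : ℕ} (hn : n ≠ 0) : 1 / (n ^ 2 + lam * n + 1) ≤ Dnorm 1 n :=
  norm_deriv_phi_one_one n ▸
    le_csSup ⟨_, mem_upperBounds_norm_deriv_phi_one hn⟩ ⟨1, by simp [unitD], rfl⟩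

lemma div_sq_rpow {c x : ℝ} (hc : 0 ≤ c) (hx : 0 ≤ x) (t : ℝ) :
    (c / x ^ 2) ^ t = c ^ t / x ^ (2 * t) := by
  rw [Real.div_rpow hc (by positivity), Real.rpow_mul hx, Real.rpow_two]

lemma Dnorm_one_rpow_le {n : ℕ} (hn : n ≠ 0) {t : ℝ} (ht : 0 ≤ t) :
    Dnorm 1 n ^ t ≤ (3 / 2) ^ t / (n : ℝ) ^ (2 * t) := by
  have h0 : 0 ≤ Dnorm 1 n := le_trans (by positivity [lam_pos]) (le_Dnorm_one hn)
  rw [← div_sq_rpow (by norm_num) (Nat.cast_nonneg n), div_div]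
  exact Real.rpow_le_rpow h0 (Dnorm_one_le hn) ht

lemma rpow_le_Dnorm_one_rpow {n : ℕ} (hn : 2 ≤ n) {t : ℝ} (ht : 0 ≤ t) :
    (0.45 : ℝ) ^ t / (n : ℝ) ^ (2 * t) ≤ Dnorm 1 n ^ t := by
  have hn2 : (2 : ℝ) ≤ n := by exact_mod_cast hn
  rw [← div_sq_rpow (by norm_num) (Nat.cast_nonneg n)]
  refine Real.rpow_le_rpow (by positivity) ((le_trans ?_ (le_Dnorm_one (by omega)))) ht
  rw [div_le_div_iff₀ (by positivity) (by positivity [lam_pos])]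
  nlinarith [lam_lt_seven_fourths]

lemma summable_one_div_natCast_add_rpow {q : ℝ} (hq : 1 < q) (N : ℕ) :
    Summable fun n : ℕ => 1 / ((N + n : ℕ) : ℝ) ^ q := by
  simpa [add_comm] using (summable_nat_add_iff N).2 (Real.summable_one_div_nat_rpow.2 hq)

lemma one_div_le_tsum_one_div_rpow {q : ℝ} (hq : 1 < q) {N : ℕ} (hN : 0 < N) :
    1 / ((q - 1) * (N : ℝ) ^ (q - 1)) ≤ ∑' n : ℕ, 1 / ((N + n : ℕ) : ℝ) ^ q := by
  have hN' : (0 : ℝ) < N := by exact_mod_cast hN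
  have anti : AntitoneOn (fun x : ℝ => x ^ (-q)) (Ici N) := fun x hx y _ hxy =>
    Real.rpow_le_rpow_of_nonpos (hN'.trans_le hx) hxy (by linarith)
  have key := anti.integral_le_tsum_comp_add N (Real.summable_nat_rpow.2 (by linarith))
    fun x hx => Real.rpow_nonneg (hN'.le.trans (le_of_lt hx)) _
  rw [integral_Ioi_rpow_of_lt (by linarith) hN'] at key
  convert key using 1
  · rw [show -q + 1 = -(q - 1) by ring, Real.rpow_neg hN'.le]
    field_simp
  · congr 1 with n
    rw [add_comm N n, Real.rpow_neg (Nat.cast_nonneg _), one_div]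

lemma div_le_tsum_Dnorm_one_rpow {t : ℝ} (ht : 1 / 2 < t) {N : ℕ} (hN : 2 ≤ N) :
    (0.45 : ℝ) ^ t / ((2 * t - 1) * (N : ℝ) ^ (2 * t - 1)) ≤ ∑' n : ℕ, Dnorm 1 (N + n) ^ t := by
  have hsum := summable_one_div_natCast_add_rpow (q := 2 * t) (by linarith) N
  have hDsum : Summable fun n : ℕ => Dnorm 1 (N + n) ^ t := by
    refine Summable.of_nonneg_of_le (fun n => ?_)
      (fun n => Dnorm_one_rpow_le (by omega) (by linarith))
      ((hsum.mul_left ((3 / 2 : ℝ) ^ t)).congr fun n => mul_one_div _ _)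
    exact le_trans (by positivity) (rpow_le_Dnorm_one_rpow (n := N + n) (by omega) (by linarith))
  calc (0.45 : ℝ) ^ t / ((2 * t - 1) * (N : ℝ) ^ (2 * t - 1))
      = (0.45 : ℝ) ^ t * (1 / ((2 * t - 1) * (N : ℝ) ^ (2 * t - 1))) := by ring
    _ ≤ (0.45 : ℝ) ^ t * ∑' n : ℕ, 1 / ((N + n : ℕ) : ℝ) ^ (2 * t) := by
        gcongr
        exact one_div_le_tsum_one_div_rpow (by linarith) (by omega)
    _ = ∑' n : ℕ, (0.45 : ℝ) ^ t * (1 / ((N + n : ℕ) : ℝ) ^ (2 * t)) := tsum_mul_left.symm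
    _ ≤ ∑' n : ℕ, Dnorm 1 (N + n) ^ t := (hsum.mul_left _).tsum_le_tsum (fun n => by
        rw [mul_one_div]; exact rpow_le_Dnorm_one_rpow (by omega) (by linarith)) hDsum

def TailCondition (K t x : ℝ) : Prop :=
  K ^ (2 * t) * (3.821 : ℝ) ^ t / x ^ (2 * t) ≤
    6 * (0.45 : ℝ) ^ t / ((2 * t - 1) * (x + 1) ^ (2 * t - 1))

lemma tailCondition_iff {K t x : ℝ} (hK : 0 ≤ K) (ht : 1 / 2 < t) (hx : 0 < x) :
    TailCondition K t x ↔
      (2 * t - 1) * (K ^ 2 * 3.821 / 0.45 * (1 + x⁻¹) ^ 2) ^ t ≤ 6 * (x + 1) := by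
  have hx1 : 0 < x + 1 := by linarith
  have h2t : 0 < 2 * t - 1 := by linarith
  have hρ : K ^ 2 * 3.821 / 0.45 * (1 + x⁻¹) ^ 2 =
      K ^ 2 * 3.821 * (x + 1) ^ 2 / (0.45 * x ^ 2) := by
    field_simp
  have hρt : (K ^ 2 * 3.821 / 0.45 * (1 + x⁻¹) ^ 2) ^ t =
      K ^ (2 * t) * (3.821 : ℝ) ^ t / x ^ (2 * t) * ((x + 1) ^ (2 * t - 1) * (x + 1)) /
        0.45 ^ t := by
    rw [hρ, Real.div_rpow (by positivity) (by positivity),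
      Real.mul_rpow (by positivity) (by positivity), Real.mul_rpow (by positivity) (by positivity),
      Real.mul_rpow (by norm_num) (by positivity),
      ← Real.rpow_natCast_mul hK, ← Real.rpow_natCast_mul hx.le, ← Real.rpow_natCast_mul hx1.le,
      Real.rpow_sub_one hx1.ne', div_mul_cancel₀ _ hx1.ne']
    push_cast
    ring
  rw [TailCondition, le_div_iff₀ (by positivity), hρt,
    ← mul_le_mul_iff_of_pos_right (by positivity : (0 : ℝ) < (x + 1) / 0.45 ^ t)]
  exact Iff.of_eq (congrArg₂ (· ≤ ·) (by ring) (by field_simp))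

lemma TailCondition.mono {K t x y : ℝ} (hK : 0 ≤ K) (ht : 1 / 2 < t) (hx : 0 < x) (hxy : x ≤ y)
    (h : TailCondition K t x) : TailCondition K t y := by
  rw [tailCondition_iff hK ht hx] at h
  rw [tailCondition_iff hK ht (hx.trans_le hxy)]
  calc (2 * t - 1) * (K ^ 2 * 3.821 / 0.45 * (1 + y⁻¹) ^ 2) ^ t
      ≤ (2 * t - 1) * (K ^ 2 * 3.821 / 0.45 * (1 + x⁻¹) ^ 2) ^ t := by
        have : 0 ≤ 2 * t - 1 := by linarith
        gcongr
        positivity [hx.trans_le hxy]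
    _ ≤ 6 * (x + 1) := h
    _ ≤ 6 * (y + 1) := by linarith

lemma TailCondition.of_exponent_le {K s t x : ℝ} (hK : 1 ≤ K) (hs : 1 / 2 < s) (hst : s ≤ t)
    (hx : 0 < x) (h : TailCondition K t x) : TailCondition K s x := by
  rw [tailCondition_iff (by linarith) (hs.trans_le hst) hx] at h
  rw [tailCondition_iff (by linarith) hs hx]
  have hρ : 1 ≤ K ^ 2 * 3.821 / 0.45 * (1 + x⁻¹) ^ 2 := by
    have hK2 : 1 ≤ K ^ 2 * 3.821 / 0.45 := by
      rw [le_div_iff₀ (by norm_num)]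
      nlinarith [one_le_pow₀ (n := 2) hK]
    exact one_le_mul_of_one_le_of_one_le hK2 (one_le_pow₀ (by simp [hx.le]))
  calc (2 * s - 1) * (K ^ 2 * 3.821 / 0.45 * (1 + x⁻¹) ^ 2) ^ s
      ≤ (2 * t - 1) * (K ^ 2 * 3.821 / 0.45 * (1 + x⁻¹) ^ 2) ^ t := by
        gcongr
        linarith
    _ ≤ 6 * (x + 1) := h

end Apollonian

open Apollonian

/-- If 6·(0.45)^t/((2t−1)(N+1)^{2t−1}) ≥ K^{2t}·(3.821)^t/N^{2t} for some K ≥ 1,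
t > 1/2 and N ≥ 1, then (i) 6·Σ_{n>M} ‖φ'_n‖_∞^t ≥ K^{2t}·‖φ'_M‖_∞^t for every M ≥ N,
and (ii) the hypothesis inequality persists for every s with 1/2 < s ≤ t. -/
theorem apollonian_sufficient_tail_condition (K t : ℝ) (hK : 1 ≤ K) (ht : 1 / 2 < t)
    (N : ℕ) (hN : 1 ≤ N)
    (h : K ^ (2 * t) * (3.821 : ℝ) ^ t / (N : ℝ) ^ (2 * t) ≤
      6 * (0.45 : ℝ) ^ t / ((2 * t - 1) * ((N : ℝ) + 1) ^ (2 * t - 1))) :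
    (∀ M : ℕ, N ≤ M →
      K ^ (2 * t) * Dnorm 1 M ^ t ≤ 6 * ∑' n : ℕ, Dnorm 1 (M + 1 + n) ^ t) ∧
    (∀ s : ℝ, 1 / 2 < s → s ≤ t →
      K ^ (2 * s) * (3.821 : ℝ) ^ s / (N : ℝ) ^ (2 * s) ≤
        6 * (0.45 : ℝ) ^ s / ((2 * s - 1) * ((N : ℝ) + 1) ^ (2 * s - 1))) := by
  have hN0 : (0 : ℝ) < N := by exact_mod_cast hN
  refine ⟨fun M hM => ?_, fun s hs hst => TailCondition.of_exponent_le hK hs hst hN0 h⟩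
  have hcond : TailCondition K t M :=
    TailCondition.mono (by linarith) ht hN0 (by exact_mod_cast hM) h
  have htail := div_le_tsum_Dnorm_one_rpow ht (N := M + 1) (by omega)
  push_cast at htail
  calc K ^ (2 * t) * Dnorm 1 M ^ t ≤ K ^ (2 * t) * ((3.821 : ℝ) ^ t / (M : ℝ) ^ (2 * t)) := by
        gcongr
        refine (Dnorm_one_rpow_le (by omega) (by linarith)).trans ?_
        gcongr
        norm_num
    _ ≤ 6 * ((0.45 : ℝ) ^ t / ((2 * t - 1) * ((M : ℝ) + 1) ^ (2 * t - 1))) := by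
        rw [← mul_div_assoc, ← mul_div_assoc]
        exact hcond
    _ ≤ 6 * ∑' n : ℕ, Dnorm 1 (M + 1 + n) ^ t := mul_le_mul_of_nonneg_left htail (by norm_num)

end
end
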